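/- Let G_0 = (V_0, E_0) and G = (V, E) be weighted digraphs with nonnegative weights satisfying Assumptions 1 and 2, let s ∈ V ⊆ V_0, let U = V_0 \ V, and suppose: s has no incoming edges in G or in G_0; every edge uv ∈ E with u ≠ s is also an edge of G_0 with the same weight; and dist_G(s, v) = dist_{G_0}(s, v) for every v ∈ V. Let t be a positive integer, let Z ⊆ V_0 with s ∈ Z, and for each u ∈ V_0 let NL(u) be a set of at most t + 1 (vertex, nonnegative real) pairs, with pairwise distinct vertices, containing (u, 0), such that: (path-weight) if (v, d) ∈ NL(u) then d is the weight of some path from u to v in G_0; and (domination) for every u ∈ V_0 \ Z, writing NL(u) = {(v_0, d_0), …, (v_k, d_k)} with 0 = d_0 < d_1 < … < d_k, if a vertex v is reachable from u in G_0 − Z (the subgraph of G_0 induced on V_0 \ Z) and v does not appear in NL(u), then k = t and d_t < dist_{G_0 − Z}(u, v). Define Z* = Z \ U, B = {u ∈ V : some vertex of U appears in NL(u)}, Y = ⋃_{b ∈ B ∪ Z*} ⋃_{bv ∈ E_t(b), v ∈ V \ (B ∪ Z*)} {x : x appears in NL(v)}, G_t = (V, ⋃_{v ∈ V} E_t(v))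 (where E_t is taken in G), and H = G_t[Z* ∪ B ∪ Y]. Then every u ∈ Near_t(s) (computed in G) satisfies u ∈ Z* ∪ B ∪ Y and dist_G(s, u) = dist_H(s, u). -/
import Mathlib


/-- A path from `s` to `t` in the digraph with edge set `E`: a finite sequence of edges
in which the head of each edge equals the tail of the next, starting at `s`, ending at `t`
(the empty sequence is a path from `s` to `s`). Paths need not be simple. -/
inductive IsPath {V : Type*} (E : Set (V × V)) : V → V → List (V × V) → Prop
  | nil (s : V) : IsPath E s s []
  | cons {s u t : V} {P : List (V × V)} :
      (s, u) ∈ E → IsPath E u t P → IsPath E s t ((s, u) :: P)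

/-- The weight of a path: the sum of its edge weights. -/
def pweight {V : Type*} (w : V × V → ℝ) (P : List (V × V)) : ℝ :=
  (P.map w).sum

/-- `distG E w u v` is the minimum weight of a path from `u` to `v`
(`+∞` if there is no such path). -/
noncomputable def distG {V : Type*} (E : Set (V × V)) (w : V × V → ℝ) (u v : V) : EReal :=
  sInf {r : EReal | ∃ P : List (V × V), IsPath E u v P ∧ r = (pweight w P : EReal)}

/-- `v` is reachable from `u`. -/
def Reach {V : Type*} (E : Set (V × V)) (u v : V) : Prop :=
  ∃ P : List (V × V), IsPath E u v P

/-- Assumption 1: every proper (contiguous) subpath of a path has strictly smaller weight. -/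
def Assumption1 {V : Type*} (E : Set (V × V)) (w : V × V → ℝ) : Prop :=
  ∀ (s t : V) (P : List (V × V)), IsPath E s t P →
    ∀ A P' B : List (V × V), P = A ++ P' ++ B → A ++ B ≠ [] →
      pweight w P' < pweight w P

/-- Assumption 2: for a fixed origin `u`, no two paths from `u` to distinct
targets have equal weight. -/
def Assumption2 {V : Type*} (E : Set (V × V)) (w : V × V → ℝ) : Prop :=
  ∀ (u x y : V) (P₁ P₂ : List (V × V)), IsPath E u x P₁ → IsPath E u y P₂ → x ≠ y →
    pweight w P₁ ≠ pweight w P₂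

/-- The edge set of the subgraph induced on the complement of `Z` (the graph `G − Z`). -/
def ERemove {V : Type*} (E : Set (V × V)) (Z : Set V) : Set (V × V) :=
  {e ∈ E | e.1 ∉ Z ∧ e.2 ∉ Z}

/-- `N` is the set of the `t` vertices distinct from `s` that are nearest to `s`
with respect to `distG` (or all vertices other than `s` reachable from `s`, if fewer
than `t` of them are reachable). -/
def IsNearSet {V : Type*} (E : Set (V × V)) (w : V × V → ℝ) (s : V) (t : ℕ)
    (N : Finset V) : Prop :=
  s ∉ N ∧ (∀ x ∈ N, Reach E s x) ∧
  (∀ x ∈ N, ∀ y : V, y ∉ N → y ≠ s → Reach E s y → distG E w s x ≤ distG E w s y) ∧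
  (N.card = t ∨ (N.card < t ∧ ∀ y : V, y ≠ s → Reach E s y → y ∈ N))

/-- `(a, b)` belongs to `E_t(a)`, i.e. it is among the `t` smallest-weight
outgoing edges of `a`. -/
def InTopT {V : Type*} (E : Set (V × V)) (w : V × V → ℝ) (t : ℕ) (a b : V) : Prop :=
  (a, b) ∈ E ∧ {c : V | (a, c) ∈ E ∧ w (a, c) < w (a, b)}.ncard < t

/-- `(E', w')` is obtained from `(E, w)` by contracting `X` into `s`:
its vertices avoid `X`; it keeps every edge of `E` avoiding `X`, and has an edge `s → v`
whenever some `x ∈ X` has an edge `x → v` with `v ∉ X`; among the resulting parallel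
edges only one of smallest weight (`w (s, v)` itself, or `distG s x + w (x, v)`) is kept. -/
def IsContraction {V : Type*} (E : Set (V × V)) (w : V × V → ℝ) (s : V) (X : Set V)
    (E' : Set (V × V)) (w' : V × V → ℝ) : Prop :=
  (∀ u v : V, ((u, v) ∈ E' ↔
      (u ∉ X ∧ v ∉ X ∧ ((u, v) ∈ E ∨ (u = s ∧ ∃ x ∈ X, (x, v) ∈ E))))) ∧
  (∀ u v : V, (u, v) ∈ E' → u ≠ s → w' (u, v) = w (u, v)) ∧
  (∀ v : V, (s, v) ∈ E' →
      ((w' (s, v) : EReal) =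
        sInf {r : EReal | ((s, v) ∈ E ∧ r = (w (s, v) : EReal)) ∨
          ∃ x ∈ X, (x, v) ∈ E ∧ r = distG E w s x + (w (x, v) : EReal)}))
section AuxPath
variable {V : Type*} {E E' : Set (V × V)} {w : V × V → ℝ}

lemma IsPath.mem_edges {s t : V} {P : List (V × V)} (h : IsPath E s t P) :
    ∀ e ∈ P, e ∈ E := by
  induction h with
  | nil => simp
  | cons he _ ih =>
    intro e hme
    rcases List.mem_cons.1 hme with rfl | hm
    · exact he
    · exact ih e hm

lemma IsPath.append {s m t : V} {P Q : List (V × V)} (h1 : IsPath E s m P)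
    (h2 : IsPath E m t Q) : IsPath E s t (P ++ Q) := by
  induction h1 with
  | nil => simpa
  | cons he _ ih => exact IsPath.cons he (ih h2)

lemma IsPath.split {s t : V} {P Q : List (V × V)} (h : IsPath E s t (P ++ Q)) :
    ∃ m, IsPath E s m P ∧ IsPath E m t Q := by
  induction P generalizing s with
  | nil => exact ⟨s, IsPath.nil s, by simpa using h⟩
  | cons e P ih =>
    cases h with
    | cons he h' =>
      obtain ⟨m, h1, h2⟩ := ih h'
      exact ⟨m, IsPath.cons he h1, h2⟩

lemma IsPath.mono (hEE : E ⊆ E') {s t : V} {P : List (V × V)} (h : IsPath E s t P) :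
    IsPath E' s t P := by
  induction h with
  | nil => exact IsPath.nil _
  | cons he _ ih => exact IsPath.cons (hEE he) ih

lemma IsPath.last_eq {s t : V} {P : List (V × V)} {e : V × V}
    (h : IsPath E s t (P ++ [e])) : t = e.2 := by
  obtain ⟨m, _, h2⟩ := h.split
  cases h2 with
  | cons he h' => cases h' with | nil => rfl

lemma pweight_nil (w : V × V → ℝ) : pweight w [] = 0 := rfl

lemma pweight_append (w : V × V → ℝ) (P Q : List (V × V)) :
    pweight w (P ++ Q) = pweight w P + pweight w Q := by
  simp [pweight]

lemma pweight_cons (w : V × V → ℝ) (e : V × V) (P : List (V × V)) :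
    pweight w (e :: P) = w e + pweight w P := by
  simp [pweight]

lemma pweight_nonneg {P : List (V × V)} (hw : ∀ e ∈ P, 0 ≤ w e) : 0 ≤ pweight w P := by
  unfold pweight
  apply List.sum_nonneg
  intro x hx
  obtain ⟨e, he, rfl⟩ := List.mem_map.1 hx
  exact hw e he

lemma pweight_pos (hA1 : Assumption1 E w) {s t : V} {P : List (V × V)}
    (h : IsPath E s t P) (hP : P ≠ []) : 0 < pweight w P := by
  have := hA1 s t P h [] [] P (by simp) (by simpa)
  simpa [pweight] using this

lemma distG_le_pweight {s t : V} {P : List (V × V)} (h : IsPath E s t P) :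
    distG E w s t ≤ (pweight w P : EReal) := sInf_le ⟨P, h, rfl⟩

lemma distG_mono (hEE : E ⊆ E') (u v : V) : distG E' w u v ≤ distG E w u v := by
  apply sInf_le_sInf
  rintro r ⟨P, hP, rfl⟩
  exact ⟨P, hP.mono hEE, rfl⟩

lemma reach_of_distG_ne_top {s x : V} (h : distG E w s x ≠ ⊤) : Reach E s x := by
  by_contra hr
  apply h
  have : {r : EReal | ∃ P : List (V × V), IsPath E s x P ∧ r = (pweight w P : EReal)} = ∅ := by
    ext r; simp only [Set.mem_setOf_eq, Set.mem_empty_iff_false, iff_false]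
    rintro ⟨P, hP, _⟩; exact hr ⟨P, hP⟩
  rw [distG, this, sInf_empty]

end AuxPath
section AuxShorten
variable {V : Type*} {E : Set (V × V)} {w : V × V → ℝ}

lemma not_nodup_split {β : Type*} {l : List β} (h : ¬ l.Nodup) :
    ∃ (x : β) (A B C : List β), l = A ++ x :: B ++ x :: C := by
  induction l with
  | nil => simp at h
  | cons a tl ih =>
    by_cases ha : a ∈ tl
    · obtain ⟨B, C, rfl⟩ := List.append_of_mem ha
      exact ⟨a, [], B, C, rfl⟩
    · have htl : ¬ tl.Nodup := by
        intro hnd; exact h (List.nodup_cons.2 ⟨ha, hnd⟩)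
      obtain ⟨x, A, B, C, rfl⟩ := ih htl
      exact ⟨x, a :: A, B, C, rfl⟩

lemma snd_split {P : List (V × V)} {A C : List V} {x : V}
    (h : P.map Prod.snd = A ++ x :: C) :
    ∃ (P₁ : List (V × V)) (e : V × V) (P₂ : List (V × V)),
      P = P₁ ++ e :: P₂ ∧ P₁.map Prod.snd = A ∧ e.2 = x ∧ P₂.map Prod.snd = C := by
  rw [List.map_eq_append_iff] at h
  obtain ⟨P₁, P', rfl, h1, h2⟩ := h
  rw [List.map_eq_cons_iff] at h2
  obtain ⟨e, P₂, rfl, he, h3⟩ := h2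
  exact ⟨P₁, e, P₂, rfl, h1, he, h3⟩

lemma exists_nodup_path_aux (hA1 : Assumption1 E w) :
    ∀ (n : ℕ) (P : List (V × V)), P.length ≤ n → ∀ {s t : V}, IsPath E s t P →
    ∃ Q : List (V × V), IsPath E s t Q ∧ pweight w Q ≤ pweight w P ∧
      (s :: Q.map Prod.snd).Nodup := by
  intro n
  induction n with
  | zero =>
    intro P hlen s t h
    have hP : P = [] := List.length_eq_zero_iff.1 (Nat.le_zero.1 hlen)
    subst hP
    cases h
    exact ⟨[], IsPath.nil _, le_rfl, by simp⟩
  | succ n ih =>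
    intro P hlen s t h
    by_cases hnd : (s :: P.map Prod.snd).Nodup
    · exact ⟨P, h, le_rfl, hnd⟩
    · obtain ⟨x, A, Bl, C, hsplit⟩ := not_nodup_split hnd
      cases A with
      | nil =>
        simp only [List.nil_append, List.cons_append, List.cons.injEq] at hsplit
        obtain ⟨hx, hmap⟩ := hsplit
        subst hx
        obtain ⟨P₁, e, P₂, rfl, hm1, he2, hm2⟩ := snd_split hmap
        have h' : IsPath E s t ((P₁ ++ [e]) ++ P₂) := by
          simpa using h
        obtain ⟨m, h1, h2⟩ := h'.split
        have hm : m = s := by rw [h1.last_eq, he2]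
        subst hm
        have hpos : 0 < pweight w (P₁ ++ [e]) := pweight_pos hA1 h1 (by simp)
        have hlen2 : P₂.length ≤ n := by
          have := hlen; simp at this ⊢; omega
        obtain ⟨Q, hQ, hQw, hQnd⟩ := ih P₂ hlen2 h2
        refine ⟨Q, hQ, ?_, hQnd⟩
        have : pweight w (P₁ ++ e :: P₂) = pweight w (P₁ ++ [e]) + pweight w P₂ := by
          rw [pweight_append, pweight_append, pweight_cons]
          simp [pweight]; ring
        linarith
      | cons a A' =>
        simp only [List.cons_append, List.cons.injEq] at hsplit
        
        obtain ⟨rfl, hmap⟩ := hsplit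
        have hmap' : List.map Prod.snd P = A' ++ x :: (Bl ++ x :: C) := by
          rw [hmap]; simp
        obtain ⟨P₁, e, P₂', rfl, hm1, he2, hm2⟩ := snd_split (A := A') (C := Bl ++ x :: C) hmap'
        obtain ⟨P₃, f, P₄, rfl, hm3, hf2, hm4⟩ := snd_split (A := Bl) (C := C) hm2
        have h' : IsPath E s t ((P₁ ++ [e]) ++ ((P₃ ++ [f]) ++ P₄)) := by
          simpa using h
        obtain ⟨m1, h1, h23⟩ := h'.split
        obtain ⟨m2, h2, h3⟩ := h23.split
        have hm1x : m1 = x := by rw [h1.last_eq, he2]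
        have hm2x : m2 = x := by rw [h2.last_eq, hf2]
        subst hm1x; subst hm2x
        have hnew : IsPath E s t ((P₁ ++ [e]) ++ P₄) := h1.append h3
        have hpos : 0 < pweight w (P₃ ++ [f]) := pweight_pos hA1 h2 (by simp)
        have hlen2 : ((P₁ ++ [e]) ++ P₄).length ≤ n := by
          have := hlen; simp at this ⊢; omega
        obtain ⟨Q, hQ, hQw, hQnd⟩ := ih _ hlen2 hnew
        refine ⟨Q, hQ, ?_, hQnd⟩
        have hw1 : pweight w (P₁ ++ e :: (P₃ ++ f :: P₄))
            = pweight w ((P₁ ++ [e]) ++ P₄) + pweight w (P₃ ++ [f]) := by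
          simp [pweight]; ring
        linarith

lemma exists_nodup_path (hA1 : Assumption1 E w) {s t : V} {P : List (V × V)}
    (h : IsPath E s t P) :
    ∃ Q : List (V × V), IsPath E s t Q ∧ pweight w Q ≤ pweight w P ∧
      (s :: Q.map Prod.snd).Nodup :=
  exists_nodup_path_aux hA1 P.length P le_rfl h

end AuxShorten
section AuxMin
variable {V : Type*} [Fintype V] {E : Set (V × V)} {w : V × V → ℝ}

lemma exists_min_path (hA1 : Assumption1 E w) {s t : V} (h : Reach E s t) :
    ∃ P : List (V × V), IsPath E s t P ∧ distG E w s t = (pweight w P : EReal) := by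
  classical
  set T : Set EReal :=
    {r | ∃ P : List (V × V), IsPath E s t P ∧ (s :: P.map Prod.snd).Nodup ∧
      r = (pweight w P : EReal)} with hT
  have hTfin : T.Finite := by
    apply Set.Finite.subset ((List.finite_length_le (V × V) (Fintype.card V)).image
      (fun P => ((pweight w P : EReal))))
    rintro r ⟨P, hP, hnd, rfl⟩
    refine ⟨P, ?_, rfl⟩
    have h1 := hnd.length_le_card
    simp only [List.length_cons, List.length_map] at h1
    simp only [Set.mem_setOf_eq]
    omega
  obtain ⟨P0, hP0⟩ := h
  obtain ⟨Q0, hQ0, hQ0w, hQ0nd⟩ := exists_nodup_path hA1 hP0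
  have hTne : T.Nonempty := ⟨_, Q0, hQ0, hQ0nd, rfl⟩
  obtain ⟨P, hP, hnd, hPw⟩ := hTne.csInf_mem hTfin
  refine ⟨P, hP, le_antisymm (distG_le_pweight hP) ?_⟩
  rw [← hPw]
  rw [distG]
  apply le_sInf
  rintro r ⟨R, hR, rfl⟩
  obtain ⟨Q, hQ, hQw, hQnd⟩ := exists_nodup_path hA1 hR
  calc sInf T ≤ (pweight w Q : EReal) := sInf_le ⟨Q, hQ, hQnd, rfl⟩
    _ ≤ _ := EReal.coe_le_coe_iff.2 hQw


end AuxMin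
section Aux4
variable {V : Type*} {E : Set (V × V)} {w : V × V → ℝ}

lemma IsPath.endpoint_unique {s a b : V} {P : List (V × V)}
    (h1 : IsPath E s a P) (h2 : IsPath E s b P) : a = b := by
  induction P generalizing s with
  | nil => cases h1; cases h2; rfl
  | cons e P ih =>
    cases h1 with
    | cons he h1' =>
      cases h2 with
      | cons he' h2' => exact ih h1' h2'

lemma prefix_opt [Fintype V] (hA1 : Assumption1 E w) {s u m : V} {π A B : List (V × V)}
    (hπw : distG E w s u = (pweight w π : EReal))
    (hA : IsPath E s m A) (hB : IsPath E m u B)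
    (hAB : pweight w π = pweight w A + pweight w B) :
    distG E w s m = (pweight w A : EReal) := by
  refine le_antisymm (distG_le_pweight hA) ?_
  by_contra hlt
  push_neg at hlt
  obtain ⟨R, hR, hRw⟩ := exists_min_path hA1 ⟨A, hA⟩
  rw [hRw] at hlt
  have hRA : pweight w R < pweight w A := EReal.coe_lt_coe_iff.1 hlt
  have hle : distG E w s u ≤ ((pweight w (R ++ B) : ℝ) : EReal) :=
    distG_le_pweight (hR.append hB)
  rw [hπw] at hle
  have : pweight w π ≤ pweight w (R ++ B) := EReal.coe_le_coe_iff.1 hle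
  rw [pweight_append] at this
  linarith

end Aux4

section Aux5
variable {α : Type*} {E : Set (α × α)} {w : α × α → ℝ}

lemma near_contra {s : α} {t : ℕ} {N : Finset α}
    (hN : IsNearSet E w s t N) {u : α} (hu : u ∈ N)
    (F : Finset α) (hcard : t ≤ F.card) (hFs : s ∉ F)
    (hF : ∀ x ∈ F, Reach E s x ∧ distG E w s x < distG E w s u) : False := by
  classical
  obtain ⟨hsN, hreach, hmin, hcards⟩ := hN
  have hFN : F ⊆ N := by
    intro x hx
    by_contra hxN
    obtain ⟨hr, hlt⟩ := hF x hx
    exact absurd (hmin u hu x hxN (fun h => hFs (h ▸ hx)) hr) (not_le.2 hlt)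
  have huF : u ∉ F := fun h => lt_irrefl _ (hF u h).2
  have hN1 : t + 1 ≤ N.card := by
    have h1 : insert u F ⊆ N := Finset.insert_subset hu hFN
    have h2 := Finset.card_le_card h1
    rw [Finset.card_insert_of_notMem huF] at h2
    omega
  rcases hcards with h | ⟨h, _⟩ <;> omega

end Aux5
section AuxInv
variable {V : Type*} {E : Set (V × V)}

lemma IsPath.nil_inv {s t : V} (h : IsPath E s t ([] : List (V × V))) : s = t := by
  cases h; rfl

lemma IsPath.cons_inv {s t a b : V} {P : List (V × V)}
    (h : IsPath E s t ((a, b) :: P)) : a = s ∧ (a, b) ∈ E ∧ IsPath E b t P := by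
  cases h with
  | cons he h' => exact ⟨rfl, he, h'⟩

end AuxInv

/-- Lemma "equivalent subgraph" (sparse case): with heavy vertices `Z`, near-lists `NL`
computed in `G₀`, and `G` equal to `G₀` with the discovered vertices `U = V₀ \ V`
contracted into `s`, every `u ∈ Near_t(s)` (computed in `G`) lies in `Z* ∪ B ∪ Y` and
`dist_G(s, u) = dist_H(s, u)` where `H = G_t[Z* ∪ B ∪ Y]`. -/
theorem stmt4 {α : Type*} [Fintype α]
    (V : Set α) (E : Set (α × α)) (w : α × α → ℝ)
    (E₀ : Set (α × α)) (w₀ : α × α → ℝ)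
    (s : α) (hsV : s ∈ V)
    (hEV : ∀ e ∈ E, e.1 ∈ V ∧ e.2 ∈ V)
    (hw : ∀ e ∈ E, 0 ≤ w e) (hw₀ : ∀ e ∈ E₀, 0 ≤ w₀ e)
    (hA1 : Assumption1 E w) (hA2 : Assumption2 E w)
    (hA1₀ : Assumption1 E₀ w₀) (hA2₀ : Assumption2 E₀ w₀)
    (hs : ∀ u : α, (u, s) ∉ E) (hs₀ : ∀ u : α, (u, s) ∉ E₀)
    (hsub : ∀ e ∈ E, e.1 ≠ s → e ∈ E₀ ∧ w e = w₀ e)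
    (hdist : ∀ v ∈ V, distG E w s v = distG E₀ w₀ s v)
    (t : ℕ) (ht : 0 < t)
    (Z : Set α) (hsZ : s ∈ Z)
    (NL : α → Finset (α × ℝ))
    (hNL0 : ∀ u : α, (u, (0 : ℝ)) ∈ NL u)
    (hNLcard : ∀ u : α, (NL u).card ≤ t + 1)
    (hNLpos : ∀ u : α, ∀ q ∈ NL u, 0 ≤ q.2)
    (hNLinj : ∀ (u x : α) (d d' : ℝ), (x, d) ∈ NL u → (x, d') ∈ NL u → d = d')
    (hpw : ∀ u : α, ∀ q ∈ NL u, ∃ P : List (α × α), IsPath E₀ u q.1 P ∧ pweight w₀ P = q.2)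
    (hdom : ∀ u : α, u ∉ Z → ∀ v : α, Reach (ERemove E₀ Z) u v → (∀ d : ℝ, (v, d) ∉ NL u) →
      (NL u).card = t + 1 ∧ ∀ q ∈ NL u, (q.2 : EReal) < distG (ERemove E₀ Z) w₀ u v)
    (Zs B Y S : Set α)
    (hZs : Zs = Z ∩ V)
    (hB : B = {u : α | u ∈ V ∧ ∃ x : α, x ∉ V ∧ ∃ d : ℝ, (x, d) ∈ NL u})
    (hY : Y = {x : α | ∃ b ∈ B ∪ Zs, ∃ v : α, InTopT E w t b v ∧ v ∈ V ∧ v ∉ B ∪ Zs ∧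
      ∃ d : ℝ, (x, d) ∈ NL v})
    (hS : S = Zs ∪ B ∪ Y)
    (HE : Set (α × α))
    (hHE : HE = {e : α × α | InTopT E w t e.1 e.2 ∧ e.1 ∈ S ∧ e.2 ∈ S})
    (N : Finset α) (hN : IsNearSet E w s t N) :
    ∀ u ∈ N, u ∈ S ∧ distG E w s u = distG HE w s u := by
  classical
  have hsZs : s ∈ Zs := by rw [hZs]; exact ⟨hsZ, hsV⟩
  have hZsS : Zs ⊆ S := by rw [hS]; intro x hx; exact Or.inl (Or.inl hx)
  have hBS : B ⊆ S := by rw [hS]; intro x hx; exact Or.inl (Or.inr hx)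
  have hYS : Y ⊆ S := by rw [hS]; intro x hx; exact Or.inr hx
  have hHEsub : HE ⊆ E := by
    rw [hHE]; rintro ⟨a, b⟩ ⟨hT, _, _⟩; exact hT.1
  intro u hu
  have hreach : Reach E s u := hN.2.1 u hu
  obtain ⟨π, hπ, hπw⟩ := exists_min_path hA1 hreach
  -- every edge of π is among the t lightest out-edges of its tail
  have intopt : ∀ (A : List (α × α)) (a b : α) (B' : List (α × α)),
      π = A ++ (a, b) :: B' → InTopT E w t a b := by
    intro A a b B' hdec
    have hsp : IsPath E s u (A ++ (a, b) :: B') := hdec ▸ hπ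
    obtain ⟨m, hA, hB⟩ := hsp.split
    obtain ⟨ham, he, hB'⟩ := hB.cons_inv
    subst ham
    by_contra hnot
    simp only [InTopT, not_and, not_lt] at hnot
    have ht' : t ≤ {c : α | (a, c) ∈ E ∧ w (a, c) < w (a, b)}.ncard := hnot he
    set C := {c : α | (a, c) ∈ E ∧ w (a, c) < w (a, b)} with hC
    have hCfin : C.Finite := Set.toFinite C
    have hcardC : t ≤ hCfin.toFinset.card := by
      rwa [Set.ncard_eq_toFinset_card _ hCfin] at ht'
    refine near_contra hN hu hCfin.toFinset hcardC ?_ ?_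
    · intro hsF
      rw [Set.Finite.mem_toFinset] at hsF
      exact hs a hsF.1
    · intro c hc
      rw [Set.Finite.mem_toFinset] at hc
      have hpc : IsPath E s c (A ++ [(a, c)]) :=
        hA.append (IsPath.cons hc.1 (IsPath.nil c))
      refine ⟨⟨_, hpc⟩, ?_⟩
      have h1 : distG E w s c ≤ ((pweight w (A ++ [(a, c)]) : ℝ) : EReal) :=
        distG_le_pweight hpc
      have hBnn : 0 ≤ pweight w B' :=
        pweight_nonneg (fun e he' => hw e (hB'.mem_edges e he'))
      have h2 : pweight w (A ++ [(a, c)]) < pweight w π := by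
        rw [hdec, pweight_append, pweight_append, pweight_cons, pweight_cons]
        simp only [pweight_nil]
        linarith [hc.2]
      calc distG E w s c ≤ _ := h1
        _ < ((pweight w π : ℝ) : EReal) := EReal.coe_lt_coe_iff.2 h2
        _ = distG E w s u := hπw.symm
  -- resolving the invariant: the current vertex lies in S
  have resolve : ∀ (m : α) (P₂ : List (α × α)), IsPath E m u P₂ →
      (m ∈ Zs ∪ B ∨ ∃ (ve : α) (Q P₁' : List (α × α)),
        ve ∈ V ∧ ve ∉ B ∧ ve ∉ Z ∧ (∀ x d, (x, d) ∈ NL ve → x ∈ Y) ∧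
        IsPath (ERemove E₀ Z) ve m Q ∧ pweight w₀ Q = pweight w Q ∧
        IsPath E s ve P₁' ∧ π = P₁' ++ (Q ++ P₂)) → m ∈ S := by
    intro m P₂ hP₂ hinv
    rcases hinv with hm | ⟨ve, Q, P₁', hveV, hveB, hveZ, hNLY, hQ, hQw, hP₁', hπdec⟩
    · rcases hm with h | h
      · exact hZsS h
      · exact hBS h
    by_cases hmNL : ∃ d : ℝ, (m, d) ∈ NL ve
    · obtain ⟨d, hd⟩ := hmNL
      exact hYS (hNLY m d hd)
    exfalso
    push_neg at hmNL
    obtain ⟨hcardNL, hdomlt⟩ := hdom ve hveZ m ⟨Q, hQ⟩ hmNL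
    have hQP₂ : IsPath E ve u (Q ++ P₂) := by
      have h1 : IsPath E s u (P₁' ++ (Q ++ P₂)) := hπdec ▸ hπ
      obtain ⟨m', h2, h3⟩ := h1.split
      rwa [hP₁'.endpoint_unique h2]
    have hrd : distG E w s ve = ((pweight w P₁' : ℝ) : EReal) := by
      refine prefix_opt hA1 hπw hP₁' hQP₂ ?_
      rw [hπdec, pweight_append]
    set r := pweight w P₁' with hr
    have hdve : distG E₀ w₀ s ve = ((r : ℝ) : EReal) := by
      rw [← hdist ve hveV]; exact hrd
    have hreach₀ : Reach E₀ s ve :=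
      reach_of_distG_ne_top (by rw [hdve]; exact EReal.coe_ne_top r)
    obtain ⟨R₀, hR₀, hR₀w⟩ := exists_min_path hA1₀ hreach₀
    have hR₀r : pweight w₀ R₀ = r := by
      rw [hdve] at hR₀w
      exact EReal.coe_eq_coe_iff.1 hR₀w.symm
    set qw := pweight w Q with hqw
    have hQle : ∀ q ∈ NL ve, q.2 < qw := by
      intro q hq
      have h1 := hdomlt q hq
      have h2 : distG (ERemove E₀ Z) w₀ ve m ≤ ((pweight w₀ Q : ℝ) : EReal) :=
        distG_le_pweight hQ
      rw [hQw] at h2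
      exact EReal.coe_lt_coe_iff.1 (lt_of_lt_of_le h1 h2)
    have hP₂nn : 0 ≤ pweight w P₂ :=
      pweight_nonneg (fun e he' => hw e (hP₂.mem_edges e he'))
    have hπsum : pweight w π = r + qw + pweight w P₂ := by
      rw [hπdec, pweight_append, pweight_append]; ring
    have hinj : Set.InjOn Prod.fst ((NL ve) : Set (α × ℝ)) := by
      rintro ⟨x, d⟩ hx ⟨x', d'⟩ hx' hxx
      simp only at hxx
      subst hxx
      rw [hNLinj ve x d d' (Finset.mem_coe.1 hx) (Finset.mem_coe.1 hx')]
    have himg : ((NL ve).image Prod.fst).card = t + 1 := by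
      rw [Finset.card_image_of_injOn hinj]; exact hcardNL
    set F := ((NL ve).image Prod.fst).erase s with hF
    have hFcard : t ≤ F.card := by
      by_cases hsI : s ∈ (NL ve).image Prod.fst
      · rw [hF, Finset.card_erase_of_mem hsI, himg]; omega
      · rw [hF, Finset.erase_eq_of_notMem hsI, himg]; omega
    refine near_contra hN hu F hFcard (Finset.notMem_erase s _) ?_
    intro x hx
    rw [hF, Finset.mem_erase] at hx
    obtain ⟨hxs, hxI⟩ := hx
    obtain ⟨q, hq, hqx⟩ := Finset.mem_image.1 hxI
    obtain ⟨x', d⟩ := q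
    simp only at hqx
    subst hqx
    have hxV : x' ∈ V := by
      by_contra hxV
      exact hveB (by rw [hB]; exact ⟨hveV, x', hxV, d, hq⟩)
    obtain ⟨Pm, hPm, hPmw⟩ := hpw ve (x', d) hq
    have hdx : distG E₀ w₀ s x' ≤ ((r + d : ℝ) : EReal) := by
      have h3 := distG_le_pweight (w := w₀) (hR₀.append hPm)
      rwa [pweight_append, hR₀r, hPmw] at h3
    have hdxE : distG E w s x' ≤ ((r + d : ℝ) : EReal) := by
      rw [hdist x' hxV]; exact hdx
    have hdlt : d < qw := hQle (x', d) hq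
    constructor
    · exact reach_of_distG_ne_top (lt_of_le_of_lt hdxE (EReal.coe_lt_top _)).ne
    · calc distG E w s x' ≤ _ := hdxE
        _ < ((pweight w π : ℝ) : EReal) := by
            apply EReal.coe_lt_coe_iff.2; rw [hπsum]; linarith
        _ = distG E w s u := hπw.symm
  -- main induction along the shortest path
  have main : ∀ (P₂ : List (α × α)) (m : α) (P₁ : List (α × α)),
      π = P₁ ++ P₂ → IsPath E s m P₁ → IsPath E m u P₂ →
      (m ∈ Zs ∪ B ∨ ∃ (ve : α) (Q P₁' : List (α × α)),
        ve ∈ V ∧ ve ∉ B ∧ ve ∉ Z ∧ (∀ x d, (x, d) ∈ NL ve → x ∈ Y) ∧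
        IsPath (ERemove E₀ Z) ve m Q ∧ pweight w₀ Q = pweight w Q ∧
        IsPath E s ve P₁' ∧ π = P₁' ++ (Q ++ P₂)) →
      u ∈ S ∧ IsPath HE m u P₂ := by
    intro P₂
    induction P₂ with
    | nil =>
      intro m P₁ hdec hP₁ hP₂ hinv
      have hmu : m = u := hP₂.nil_inv
      subst hmu
      exact ⟨resolve m [] hP₂ hinv, IsPath.nil _⟩
    | cons e P₂' ih =>
      intro a P₁ hdec hP₁ hP₂ hinv
      obtain ⟨a, b⟩ := e
      obtain ⟨ham, he, hP₂'⟩ := hP₂.cons_inv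
      subst ham
      -- here the edge is (a, b)
      have hmS : a ∈ S := resolve a ((a, b) :: P₂') hP₂ hinv
      have htop : InTopT E w t a b := intopt P₁ a b P₂' hdec
      have hbV : b ∈ V := (hEV (a, b) he).2
      have hbZ : b ∉ Zs → b ∉ Z := by
        intro h1 h2; exact h1 (by rw [hZs]; exact ⟨h2, hbV⟩)
      have hP₁b : IsPath E s b (P₁ ++ [(a, b)]) :=
        hP₁.append (IsPath.cons he (IsPath.nil b))
      have hdec' : π = (P₁ ++ [(a, b)]) ++ P₂' := by
        rw [hdec]; simp
      have hinv' : b ∈ Zs ∪ B ∨ ∃ (ve : α) (Q P₁' : List (α × α)),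
          ve ∈ V ∧ ve ∉ B ∧ ve ∉ Z ∧ (∀ x d, (x, d) ∈ NL ve → x ∈ Y) ∧
          IsPath (ERemove E₀ Z) ve b Q ∧ pweight w₀ Q = pweight w Q ∧
          IsPath E s ve P₁' ∧ π = P₁' ++ (Q ++ P₂') := by
        by_cases hb : b ∈ Zs ∪ B
        · exact Or.inl hb
        right
        have hbB : b ∉ B := fun h => hb (Or.inr h)
        have hbZs : b ∉ Zs := fun h => hb (Or.inl h)
        by_cases hm : a ∈ Zs ∪ B
        · -- exit step: ve := b, Q := []
          refine ⟨b, [], P₁ ++ [(a, b)], hbV, hbB, hbZ hbZs, ?_, IsPath.nil _, rfl,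
            hP₁b, by simpa using hdec'⟩
          intro x d hxd
          rw [hY]
          have hm' : a ∈ B ∪ Zs := by
            rcases hm with h | h
            · exact Or.inr h
            · exact Or.inl h
          have hbBZ : b ∉ B ∪ Zs := by
            rintro (h | h)
            · exact hbB h
            · exact hbZs h
          exact ⟨a, hm', b, htop, hbV, hbBZ, d, hxd⟩
        · -- continuation step
          rcases hinv with hmZB | ⟨ve, Q, P₁', hveV, hveB, hveZ, hNLY, hQ, hQw, hveP, hπdec⟩
          · exact absurd hmZB hm
          have hmV : a ∈ V := (hEV (a, b) he).1
          have hmZs : a ∉ Zs := fun h => hm (Or.inl h)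
          have hmZ : a ∉ Z := fun h => hmZs (by rw [hZs]; exact ⟨h, hmV⟩)
          have hms : a ≠ s := fun h => hmZs (h ▸ hsZs)
          obtain ⟨hE₀e, hwe⟩ := hsub (a, b) he hms
          have hQ' : IsPath (ERemove E₀ Z) ve b (Q ++ [(a, b)]) :=
            hQ.append (IsPath.cons ⟨hE₀e, hmZ, hbZ hbZs⟩ (IsPath.nil b))
          refine ⟨ve, Q ++ [(a, b)], P₁', hveV, hveB, hveZ, hNLY, hQ', ?_, hveP, ?_⟩
          · rw [pweight_append, pweight_append, hQw]
            simp [pweight, hwe]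
          · rw [hπdec]; simp
      obtain ⟨huS, hHP⟩ := ih b (P₁ ++ [(a, b)]) hdec' hP₁b hP₂' hinv'
      have hbS : b ∈ S := resolve b P₂' hP₂' hinv'
      have hedge : (a, b) ∈ HE := by
        rw [hHE]; exact ⟨htop, hmS, hbS⟩
      exact ⟨huS, IsPath.cons hedge hHP⟩
  obtain ⟨huS, hHπ⟩ := main π s [] (by simp) (IsPath.nil s) hπ (Or.inl (Or.inl hsZs))
  refine ⟨huS, le_antisymm (distG_mono hHEsub s u) ?_⟩
  rw [hπw]
  exact distG_le_pweight hHπ
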